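/- The constant coefficient system ℚ̲ (sending every orbit G/K to ℚ and every G-map to the identity) is an injective object in the category of rational Bredon coefficient systems over a finite group G. -/

import Mathlib

open CategoryTheory

/-- Objects of the canonical orbit category of `G`: the orbits `G/H`
for subgroups `H ≤ G`. -/
structure OrbitObj (G : Type) [Group G] where
  H : Subgroup G

variable (G : Type) [Group G]

/-- The canonical orbit category of `G`: objects are the `G`-sets `G/H`,
morphisms are the `G`-equivariant maps. -/
instance : Category (OrbitObj G) where
  Hom A B := {f : G ⧸ A.H → G ⧸ B.H // ∀ (g : G) (x : G ⧸ A.H), f (g • x) = g • f x}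
  id A := ⟨id, fun _ _ => rfl⟩
  comp f g := ⟨g.1 ∘ f.1, by intro a x; simp only [Function.comp_apply, f.2, g.2]⟩
  id_comp := by intros; rfl
  comp_id := by intros; rfl
  assoc := by intros; rfl

/-- A (rational) Bredon coefficient system: a contravariant functor from the
orbit category of `G` to `ℚ`-vector spaces. -/
abbrev CoefficientSystem := (OrbitObj G)ᵒᵖ ⥤ ModuleCat.{0} ℚ

/-- The constant coefficient system `ℚ̲`, sending every orbit to `ℚ`
and every `G`-map to the identity. -/
def constQ : CoefficientSystem G := (Functor.const (OrbitObj G)ᵒᵖ).obj (ModuleCat.of ℚ ℚ)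

/-
A natural transformation `Y ⟶ ℚ̲` is determined by its component at the free orbit `G/e`: every
orbit `G/K` receives the projection `G/e → G/K`, which `ℚ̲` sends to the identity. The components
that occur are exactly the linear forms on `Y(G/e)` invariant under the action of
`G = Aut(G/e)` by right multiplication, since every map `G/e → G/L` is, up to such an
automorphism, the projection. Hence `Hom(Y, ℚ̲) ≅ Hom_{ℚ[G]}(Y(G/e), ℚ)` naturally in `Y`, and
evaluation at `G/e` preserves monomorphisms, so `ℚ̲` inherits injectivity from the trivial
representation `ℚ`, which is injective in `Rep ℚ G` by Maschke's theorem.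
-/

namespace OrbitObj

def free : OrbitObj G := ⟨⊥⟩

variable {G}

def fromFree {K : OrbitObj G} (y : G ⧸ K.H) : free G ⟶ K :=
  ⟨fun x => QuotientGroup.quotientBot x • y, fun g x => by
    induction x using QuotientGroup.induction_on
    exact mul_smul _ _ y⟩

lemma fromFree_mk {K : OrbitObj G} (y : G ⧸ K.H) (g : G) :
    (fromFree y).1 (g : G ⧸ (free G).H) = g • y := rfl

lemma fromFree_comp {K L : OrbitObj G} (y : G ⧸ K.H) (u : K ⟶ L) :
    fromFree y ≫ u = fromFree (u.1 y) := by
  apply Subtype.ext; funext x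
  induction x using QuotientGroup.induction_on
  exact u.2 _ _

def proj (K : OrbitObj G) : free G ⟶ K := fromFree ((1 : G) : G ⧸ K.H)

def rmul (a : G) : free G ⟶ free G := fromFree (a : G ⧸ (free G).H)

lemma rmul_one : rmul (1 : G) = 𝟙 (free G) := by
  apply Subtype.ext; funext x
  induction x using QuotientGroup.induction_on
  exact congrArg _ (mul_one _)

lemma rmul_comp_rmul (a b : G) : rmul a ≫ rmul b = rmul (a * b) := by
  rw [rmul, fromFree_comp]; rfl

lemma exists_proj_comp_eq_rmul_comp_proj {K L : OrbitObj G} (u : K ⟶ L) :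
    ∃ a : G, proj K ≫ u = rmul a ≫ proj L := by
  obtain ⟨a, ha⟩ := QuotientGroup.mk_surjective (u.1 ((1 : G) : G ⧸ K.H))
  refine ⟨a, ?_⟩
  rw [proj, fromFree_comp, rmul, fromFree_comp, ← ha, proj, fromFree_mk]
  simp

lemma proj_free : proj (free G) = 𝟙 (free G) := rmul_one

end OrbitObj

namespace CoefficientSystem

open Opposite OrbitObj

variable {G}

def freeOrbitRep (Y : CoefficientSystem G) : Rep ℚ G :=
  Rep.of (X := Y.obj (op (free G)))
    { toFun := fun a => (Y.map (rmul a).op).hom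
      map_one' := by rw [rmul_one, op_id, Y.map_id]; rfl
      map_mul' := fun a b => by rw [← rmul_comp_rmul, op_comp, Y.map_comp]; rfl }

def freeOrbitRepMap {X Y : CoefficientSystem G} (f : X ⟶ Y) : freeOrbitRep X ⟶ freeOrbitRep Y :=
  Rep.ofHom ⟨(f.app (op (free G))).hom, fun a => by
    ext x; exact ConcreteCategory.congr_hom (f.naturality (rmul a).op) x⟩

instance mono_freeOrbitRepMap {X Y : CoefficientSystem G} (f : X ⟶ Y) [Mono f] :
    Mono (freeOrbitRepMap f) :=
  ConcreteCategory.mono_of_injective _ <|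
    (ModuleCat.mono_iff_injective (f.app (op (free G)))).mp inferInstance

def homConstQEquiv (Y : CoefficientSystem G) :
    (Y ⟶ constQ G) ≃ (freeOrbitRep Y ⟶ Rep.trivial ℚ G ℚ) where
  toFun g := Rep.ofHom ⟨(g.app (op (free G))).hom, fun a => by
    ext x; exact ConcreteCategory.congr_hom (g.naturality (rmul a).op) x⟩
  invFun ψ :=
    { app := fun K => ModuleCat.ofHom (ψ.hom.toLinearMap ∘ₗ (Y.map (proj K.unop).op).hom)
      naturality := fun K L u => by
        obtain ⟨a, ha⟩ := exists_proj_comp_eq_rmul_comp_proj u.unop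
        have hY : Y.map u ≫ Y.map (proj L.unop).op =
            Y.map (proj K.unop).op ≫ Y.map (rmul a).op := by
          rw [← Y.map_comp, ← Y.map_comp]
          exact congrArg Y.map (Quiver.Hom.unop_inj ha)
        ext y
        exact (congrArg ψ.hom (ConcreteCategory.congr_hom hY y)).trans (Rep.hom_comm_apply ψ a _) }
  left_inv g := by
    ext K x
    exact ConcreteCategory.congr_hom (g.naturality (proj K.unop).op) x
  right_inv ψ := by
    ext x
    change ψ.hom ((Y.map (proj (free G)).op).hom x) = ψ.hom x
    rw [proj_free, op_id, Y.map_id]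
    rfl

lemma homConstQEquiv_symm_comp {X Y : CoefficientSystem G} (f : X ⟶ Y)
    (ψ : freeOrbitRep Y ⟶ Rep.trivial ℚ G ℚ) :
    (homConstQEquiv X).symm (freeOrbitRepMap f ≫ ψ) = f ≫ (homConstQEquiv Y).symm ψ := by
  ext K x
  change ψ.hom ((f.app (op (free G))).hom ((X.map (proj K.unop).op).hom x)) =
    ψ.hom ((Y.map (proj K.unop).op).hom ((f.app K).hom x))
  rw [NatTrans.naturality_apply]

end CoefficientSystem

/-- For a finite group `G`, the constant coefficient system `ℚ̲` is an
injective object in the category of rational Bredon coefficient systems. -/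
theorem constQ_injective [Fintype G] : CategoryTheory.Injective (constQ G) := by
  have : NeZero (Nat.card G : ℚ) := ⟨Nat.cast_ne_zero.mpr Nat.card_pos.ne'⟩
  refine ⟨fun {X Y} g f _ => ?_⟩
  let e := CoefficientSystem.homConstQEquiv (G := G)
  let ψ := Injective.factorThru (e X g) (CoefficientSystem.freeOrbitRepMap f)
  refine ⟨(e Y).symm ψ, ?_⟩
  rw [← CoefficientSystem.homConstQEquiv_symm_comp, Injective.comp_factorThru,
    Equiv.symm_apply_apply]
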